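/- Let σ = σ_β be the softplus activation σ_β(x) = (1/β)·log(e^{βx} + 1) with β > 0, and let Z be a centered Gaussian random variable with variance s² (any s > 0). Then the function x ↦ x · E[σ'(x + Z)] / E[σ(x + Z)] is strictly increasing on ℝ. -/

import Mathlib

/-!
Write `F(x) = E σ(x + Z)`, so that the function is `x F'(x) / F(x)`, whose derivative has numerator
`F' F + x (F'' F - F'²)`. For `x ≥ 0` this equals `F' (F - x F') + x F'' F > 0`, because
`0 < F' ≤ 1`, `F'' ≥ 0` and `F(x) > x` (as `σ(y) > y` and `E Z = 0`). For `x < 0` it is positive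
because `F` is log-concave: by Stein's identity `E[Z g(x + Z)] = s² E[g'(x + Z)]`, the
inequality `F'' F ≤ F'²` is the correlation inequality
`E[Z σ'(x + Z)] E[σ(x + Z)] ≤ E[Z σ(x + Z)] E[σ'(x + Z)]`, which holds, by symmetrizing over two
independent copies of `Z`, because `σ / σ'` is increasing.
-/

open MeasureTheory ProbabilityTheory Real Asymptotics
open scoped NNReal

/-- The softplus activation `σ_β(x) = (1/β) log(e^{βx} + 1)`. -/
noncomputable def softplus (β x : ℝ) : ℝ := (1 / β) * Real.log (Real.exp (β * x) + 1)

section Chebyshev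

variable {α : Type*} [MeasurableSpace α] {μ : Measure α} [SFinite μ] {g a b : α → ℝ}

theorem integral_mul_mul_integral_le_of_pairwise
    (hpair : ∀ x y, 0 ≤ (g x - g y) * (b x * a y - a x * b y))
    (ha : Integrable a μ) (hb : Integrable b μ)
    (hga : Integrable (fun x => g x * a x) μ) (hgb : Integrable (fun x => g x * b x) μ) :
    (∫ x, g x * a x ∂μ) * ∫ x, b x ∂μ ≤ (∫ x, g x * b x ∂μ) * ∫ x, a x ∂μ := by
  set D : α × α → ℝ := fun p => g p.1 * b p.1 * a p.2 - g p.1 * a p.1 * b p.2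
  have hD : Integrable D (μ.prod μ) := (hgb.mul_prod ha).sub (hga.mul_prod hb)
  have hD_eq : ∫ p, D p ∂μ.prod μ =
      (∫ x, g x * b x ∂μ) * (∫ x, a x ∂μ) - (∫ x, g x * a x ∂μ) * ∫ x, b x ∂μ := by
    rw [integral_sub (hgb.mul_prod ha) (hga.mul_prod hb),
      integral_prod_mul (fun x => g x * b x) a, integral_prod_mul (fun x => g x * a x) b]
  have hsymm : 0 ≤ ∫ p, (D p + D p.swap) ∂μ.prod μ := integral_nonneg fun p => by
    have : D p + D p.swap = (g p.1 - g p.2) * (b p.1 * a p.2 - a p.1 * b p.2) := by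
      simp only [D, Prod.fst_swap, Prod.snd_swap]; ring
    exact this ▸ hpair p.1 p.2
  rw [integral_add hD (hD.swap : Integrable (fun p => D p.swap) _), integral_prod_swap D] at hsymm
  linarith

end Chebyshev

section GaussianIntegrationByParts

theorem hasDerivAt_gaussianPDFReal (μ : ℝ) (v : ℝ≥0) (x : ℝ) :
    HasDerivAt (gaussianPDFReal μ v) (-((x - μ) / v) * gaussianPDFReal μ v x) x := by
  have hexp : HasDerivAt (fun y => -(y - μ) ^ 2 / (2 * v)) (-(2 * (x - μ)) / (2 * v)) x := by
    simpa using (((hasDerivAt_id x).sub_const μ).fun_pow 2).fun_neg.div_const (2 * (v : ℝ))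
  rw [gaussianPDFReal_def]
  exact (hexp.exp.const_mul _).congr_deriv (by ring)

variable {μ : ℝ} {v : ℝ≥0}

theorem integrable_gaussianPDFReal_mul (hv : v ≠ 0) {f : ℝ → ℝ}
    (hf : Integrable f (gaussianReal μ v)) :
    Integrable (fun x => gaussianPDFReal μ v x * f x) := by
  rw [gaussianReal_of_var_ne_zero _ hv, integrable_withDensity_iff_integrable_smul'
    (measurable_gaussianPDF _ _) (ae_of_all _ fun _ => gaussianPDF_lt_top)] at hf
  simpa using hf

theorem integral_sub_mul_gaussianReal (hv : v ≠ 0) {g g' : ℝ → ℝ}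
    (hg : ∀ x, HasDerivAt g (g' x) x) (hg_int : Integrable g (gaussianReal μ v))
    (hg_mul : Integrable (fun x => (x - μ) * g x) (gaussianReal μ v))
    (hg' : Integrable g' (gaussianReal μ v)) :
    ∫ x, (x - μ) * g x ∂gaussianReal μ v = v * ∫ x, g' x ∂gaussianReal μ v := by
  have hφ_mul := integrable_gaussianPDFReal_mul hv hg_mul
  have hrw : (fun x => g x * (-((x - μ) / v) * gaussianPDFReal μ v x)) =
      fun x => -(v : ℝ)⁻¹ * (gaussianPDFReal μ v x * ((x - μ) * g x)) := by
    funext x; ring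
  have hparts := integral_mul_deriv_eq_deriv_mul_of_integrable (fun x _ => hg x)
    (fun x _ => hasDerivAt_gaussianPDFReal μ v x)
    (by rw [Pi.mul_def, hrw]; exact hφ_mul.const_mul _)
    (by simpa only [Pi.mul_def, mul_comm] using integrable_gaussianPDFReal_mul hv hg')
    (by simpa only [Pi.mul_def, mul_comm] using integrable_gaussianPDFReal_mul hv hg_int)
  rw [hrw, integral_const_mul] at hparts
  simp only [integral_gaussianReal_eq_integral_smul hv, smul_eq_mul]
  rw [integral_congr_ae (ae_of_all _ fun x => mul_comm (g' x) _)] at hparts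
  field_simp at hparts ⊢
  linarith

end GaussianIntegrationByParts

section LinearGrowth

variable {μ : Measure ℝ} {f : ℝ → ℝ}

theorem isBigO_one_add_abs_of_abs_le {C : ℝ} (hC : ∀ y, |f y| ≤ C) :
    f =O[⊤] fun y => 1 + |y| := by
  refine isBigO_top.2 ⟨C, fun y => ?_⟩
  have hC0 : 0 ≤ C := (abs_nonneg _).trans (hC 0)
  rw [Real.norm_eq_abs, Real.norm_of_nonneg (by positivity)]
  nlinarith [hC y, abs_nonneg y]

theorem integrable_comp_const_add_of_isBigO [IsFiniteMeasure μ] (hμ : Integrable id μ)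
    (hf : Continuous f) (hgrowth : f =O[⊤] fun y => 1 + |y|) (x : ℝ) :
    Integrable (fun z => f (x + z)) μ := by
  obtain ⟨C, hC⟩ := isBigO_top.1 hgrowth
  have hC0 : 0 ≤ C := by simpa using (norm_nonneg _).trans (hC 0)
  refine Integrable.mono' (((integrable_const (1 + |x|)).add hμ.norm).const_mul C)
    (by fun_prop) (ae_of_all _ fun z => ?_)
  have hz : |f (x + z)| ≤ C * (1 + |x + z|) := by
    simpa only [Real.norm_eq_abs, abs_of_nonneg (by positivity : (0 : ℝ) ≤ 1 + |x + z|)]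
      using hC (x + z)
  simp only [Pi.add_apply, id, Real.norm_eq_abs]
  nlinarith [abs_add_le x z]

theorem integrable_mul_comp_const_add_of_isBigO [IsFiniteMeasure μ] (hμ : MemLp id 2 μ)
    (hf : Continuous f) (hgrowth : f =O[⊤] fun y => 1 + |y|) (x : ℝ) :
    Integrable (fun z => z * f (x + z)) μ := by
  obtain ⟨C, hC⟩ := isBigO_top.1 hgrowth
  have hC0 : 0 ≤ C := by simpa using (norm_nonneg _).trans (hC 0)
  refine Integrable.mono'
    ((((hμ.integrable one_le_two).norm.const_mul (1 + |x|)).add hμ.integrable_sq).const_mul C)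
    (by fun_prop) (ae_of_all _ fun z => ?_)
  have hz : |f (x + z)| ≤ C * (1 + |x + z|) := by
    simpa only [Real.norm_eq_abs, abs_of_nonneg (by positivity : (0 : ℝ) ≤ 1 + |x + z|)]
      using hC (x + z)
  simp only [Pi.add_apply, id, Real.norm_eq_abs, abs_mul]
  calc |z| * |f (x + z)| ≤ |z| * (C * (1 + |x| + |z|)) :=
        mul_le_mul_of_nonneg_left
          (hz.trans (mul_le_mul_of_nonneg_left (by linarith [abs_add_le x z]) hC0)) (abs_nonneg z)
    _ = C * ((1 + |x|) * |z| + z ^ 2) := by rw [← sq_abs z]; ring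

end LinearGrowth

theorem integral_pos_of_forall_pos {α : Type*} [MeasurableSpace α] {μ : Measure α} [NeZero μ]
    {f : α → ℝ} (hf : Integrable f μ) (hpos : ∀ x, 0 < f x) : 0 < ∫ x, f x ∂μ := by
  rw [integral_pos_iff_support_of_nonneg (fun x => (hpos x).le) hf,
    Function.support_eq_univ fun x => (hpos x).ne']
  exact Measure.measure_univ_pos.2 (NeZero.ne μ)

theorem hasDerivAt_integral_comp_const_add {μ : Measure ℝ} [IsFiniteMeasure μ] {f f' : ℝ → ℝ}
    (hf : ∀ y, HasDerivAt f (f' y) y) (hf' : Continuous f') {C : ℝ} (hC : ∀ y, |f' y| ≤ C)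
    {x : ℝ} (hint : Integrable (fun z => f (x + z)) μ) :
    HasDerivAt (fun x => ∫ z, f (x + z) ∂μ) (∫ z, f' (x + z) ∂μ) x := by
  have hfc : Continuous f := continuous_iff_continuousAt.2 fun y => (hf y).continuousAt
  exact (hasDerivAt_integral_of_dominated_loc_of_deriv_le Filter.univ_mem
    (Filter.Eventually.of_forall fun _ => by fun_prop) hint (by fun_prop)
    (ae_of_all _ fun z x' _ => hC (x' + z)) (integrable_const C)
    (ae_of_all _ fun z x' _ => (hf (x' + z)).comp_add_const x' z)).2

section GaussianSmoothing

variable {v : ℝ≥0} {f f' f'' : ℝ → ℝ}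

theorem lt_integral_comp_const_add_gaussianReal (hf : ∀ y, y < f y) {x : ℝ}
    (hint : Integrable (fun z => f (x + z)) (gaussianReal 0 v)) :
    x < ∫ z, f (x + z) ∂gaussianReal 0 v := by
  have hz : Integrable (fun z : ℝ => z) (gaussianReal 0 v) := IsGaussian.integrable_id
  have hid : Integrable (fun z => x + z) (gaussianReal 0 v) := (integrable_const x).add hz
  have hmean : ∫ z, (x + z) ∂gaussianReal 0 v = x := by
    rw [integral_add (integrable_const x) hz, integral_const, integral_id_gaussianReal]
    simp
  have hgap : 0 < ∫ z, (f (x + z) - (x + z)) ∂gaussianReal 0 v :=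
    integral_pos_of_forall_pos (hint.sub hid) fun z => sub_pos.2 (hf (x + z))
  rw [integral_sub hint hid, hmean] at hgap
  linarith

theorem integral_comp_const_add_mul_le_sq (hv : v ≠ 0)
    (hf : ∀ y, HasDerivAt f (f' y) y) (hf' : ∀ y, HasDerivAt f' (f'' y) y)
    (hf'' : Continuous f'') (hratio : ∀ u w, u ≤ w → f u * f' w ≤ f w * f' u)
    (hf_growth : f =O[⊤] fun y => 1 + |y|) (hf'_growth : f' =O[⊤] fun y => 1 + |y|)
    (hf''_growth : f'' =O[⊤] fun y => 1 + |y|) (x : ℝ) :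
    (∫ z, f'' (x + z) ∂gaussianReal 0 v) * ∫ z, f (x + z) ∂gaussianReal 0 v ≤
      (∫ z, f' (x + z) ∂gaussianReal 0 v) ^ 2 := by
  have hfc : Continuous f := continuous_iff_continuousAt.2 fun y => (hf y).continuousAt
  have hf'c : Continuous f' := continuous_iff_continuousAt.2 fun y => (hf' y).continuousAt
  have h1 := IsGaussian.integrable_id (μ := gaussianReal 0 v)
  have h2 := memLp_id_gaussianReal (μ := 0) (v := v) 2
  have hF := integrable_comp_const_add_of_isBigO h1 hfc hf_growth x
  have hP := integrable_comp_const_add_of_isBigO h1 hf'c hf'_growth x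
  have hzF := integrable_mul_comp_const_add_of_isBigO h2 hfc hf_growth x
  have hzP := integrable_mul_comp_const_add_of_isBigO h2 hf'c hf'_growth x
  have hsteinF : ∫ z, z * f (x + z) ∂gaussianReal 0 v = v * ∫ z, f' (x + z) ∂gaussianReal 0 v := by
    simpa only [sub_zero] using integral_sub_mul_gaussianReal hv
      (fun z => (hf (x + z)).comp_const_add x z) hF (by simpa only [sub_zero] using hzF) hP
  have hsteinP : ∫ z, z * f' (x + z) ∂gaussianReal 0 v =
      v * ∫ z, f'' (x + z) ∂gaussianReal 0 v := by
    simpa only [sub_zero] using integral_sub_mul_gaussianReal hv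
      (fun z => (hf' (x + z)).comp_const_add x z) hP (by simpa only [sub_zero] using hzP)
      (integrable_comp_const_add_of_isBigO h1 hf'' hf''_growth x)
  have hpair : ∀ z w, 0 ≤ (z - w) * (f (x + z) * f' (x + w) - f' (x + z) * f (x + w)) := by
    intro z w
    rcases le_total z w with hzw | hwz
    · have := hratio (x + z) (x + w) (by linarith)
      exact mul_nonneg_of_nonpos_of_nonpos (sub_nonpos.2 hzw) (by linarith)
    · have := hratio (x + w) (x + z) (by linarith)
      exact mul_nonneg (sub_nonneg.2 hwz) (by linarith)
  have hcorr := integral_mul_mul_integral_le_of_pairwise hpair hP hF hzP hzF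
  rw [hsteinF, hsteinP] at hcorr
  have hv_pos : (0 : ℝ) < v := by positivity
  nlinarith

end GaussianSmoothing

theorem strictMono_mul_div_of_hasDerivAt {F P Q : ℝ → ℝ}
    (hF : ∀ x, HasDerivAt F (P x) x) (hP : ∀ x, HasDerivAt P (Q x) x)
    (hF_pos : ∀ x, 0 < F x) (hF_gt : ∀ x, x < F x) (hP_pos : ∀ x, 0 < P x)
    (hP_le : ∀ x, P x ≤ 1) (hQ : ∀ x, 0 ≤ Q x) (hlogConcave : ∀ x, Q x * F x ≤ P x ^ 2) :
    StrictMono fun x => x * P x / F x := by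
  refine strictMono_of_deriv_pos fun x => ?_
  rw [(((hasDerivAt_id' x).fun_mul (hP x)).fun_div (hF x) (hF_pos x).ne').deriv]
  refine div_pos ?_ (pow_pos (hF_pos x) 2)
  simp only [one_mul]
  have hPF := mul_pos (hP_pos x) (hF_pos x)
  rcases le_or_gt 0 x with hx | hx
  · -- P (F - x P) + x Q F, with F > x ≥ x P
    nlinarith [mul_nonneg (mul_nonneg hx (hQ x)) (hF_pos x).le, hF_gt x,
      mul_le_mul_of_nonneg_left (hP_le x) hx, hP_pos x]
  · -- P F > 0, and x (Q F - P²) ≥ 0 by log-concavity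
    nlinarith [mul_nonneg_of_nonpos_of_nonpos hx.le (sub_nonpos.2 (hlogConcave x))]

section Softplus

variable {β : ℝ}

theorem hasDerivAt_softplus (hβ : β ≠ 0) (x : ℝ) :
    HasDerivAt (softplus β) (sigmoid (β * x)) x := by
  have hlog : HasDerivAt (fun x => Real.log (Real.exp (β * x) + 1))
      (β * Real.exp (β * x) / (Real.exp (β * x) + 1)) x := by
    simpa [mul_comm] using (((hasDerivAt_id x).const_mul β).exp.add_const 1).log (by positivity)
  refine (hlog.const_mul (1 / β)).congr_deriv ?_
  rw [sigmoid_def, Real.exp_neg]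
  field_simp

theorem deriv_softplus (hβ : β ≠ 0) : deriv (softplus β) = fun x => sigmoid (β * x) :=
  funext fun x => (hasDerivAt_softplus hβ x).deriv

theorem hasDerivAt_sigmoid_const_mul (β x : ℝ) :
    HasDerivAt (fun x => sigmoid (β * x)) (β * (sigmoid (β * x) * (1 - sigmoid (β * x)))) x :=
  ((hasDerivAt_sigmoid (β * x)).comp x ((hasDerivAt_id' x).const_mul β)).congr_deriv (by ring)

theorem continuous_softplus (β : ℝ) : Continuous (softplus β) := by
  unfold softplus; fun_prop (disch := intro; positivity)

theorem softplus_pos (hβ : 0 < β) (x : ℝ) : 0 < softplus β x :=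
  mul_pos (one_div_pos.2 hβ) (Real.log_pos (by linarith [Real.exp_pos (β * x)]))

theorem lt_softplus (hβ : 0 < β) (x : ℝ) : x < softplus β x := by
  have h : β * x < Real.log (Real.exp (β * x) + 1) :=
    (Real.lt_log_iff_exp_lt (by positivity)).2 (lt_add_one _)
  calc x = 1 / β * (β * x) := by field_simp
    _ < softplus β x := mul_lt_mul_of_pos_left h (one_div_pos.2 hβ)

theorem softplus_le_abs_add (hβ : 0 < β) (x : ℝ) : softplus β x ≤ |x| + Real.log 2 / β := by
  have h : Real.exp (β * x) + 1 ≤ 2 * Real.exp (β * |x|) := by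
    have h1 : Real.exp (β * x) ≤ Real.exp (β * |x|) := by gcongr; exact le_abs_self x
    have h2 : 1 ≤ Real.exp (β * |x|) := Real.one_le_exp (by positivity)
    linarith
  have hlog : Real.log (Real.exp (β * x) + 1) ≤ Real.log 2 + β * |x| := by
    calc Real.log (Real.exp (β * x) + 1) ≤ Real.log (2 * Real.exp (β * |x|)) :=
          Real.log_le_log (by positivity) h
      _ = Real.log 2 + β * |x| := by
          rw [Real.log_mul two_ne_zero (Real.exp_pos _).ne', Real.log_exp]
  calc softplus β x ≤ 1 / β * (Real.log 2 + β * |x|) :=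
        mul_le_mul_of_nonneg_left hlog (one_div_pos.2 hβ).le
    _ = |x| + Real.log 2 / β := by field_simp; ring

theorem softplus_isBigO (hβ : 0 < β) : softplus β =O[⊤] fun y => 1 + |y| := by
  refine isBigO_top.2 ⟨1 + Real.log 2 / β, fun y => ?_⟩
  have hlog2 : 0 ≤ Real.log 2 / β := div_nonneg (Real.log_nonneg one_le_two) hβ.le
  rw [Real.norm_of_nonneg (softplus_pos hβ y).le, Real.norm_of_nonneg (by positivity)]
  nlinarith [softplus_le_abs_add hβ y, abs_nonneg y]

theorem monotone_log_one_add_exp_mul_one_add_exp_neg :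
    Monotone fun t => Real.log (1 + Real.exp t) * (1 + Real.exp (-t)) := by
  have hderiv : ∀ t, HasDerivAt (fun t => Real.log (1 + Real.exp t) * (1 + Real.exp (-t)))
      (1 - Real.exp (-t) * Real.log (1 + Real.exp t)) t := by
    intro t
    have hlog := ((Real.hasDerivAt_exp t).const_add 1).log (by positivity)
    have hexp := ((hasDerivAt_neg t).exp).const_add 1
    refine (hlog.mul hexp).congr_deriv ?_
    rw [Real.exp_neg]
    field_simp
    ring
  refine monotone_of_deriv_nonneg (fun t => (hderiv t).differentiableAt) fun t => ?_
  rw [(hderiv t).deriv, sub_nonneg]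
  calc Real.exp (-t) * Real.log (1 + Real.exp t) ≤ Real.exp (-t) * Real.exp t := by
        gcongr; linarith [Real.log_le_sub_one_of_pos (by positivity : 0 < 1 + Real.exp t)]
    _ = 1 := by rw [← Real.exp_add, neg_add_cancel, Real.exp_zero]

theorem sigmoid_mul_one_sub_sigmoid_pos (t : ℝ) : 0 < sigmoid t * (1 - sigmoid t) :=
  mul_pos (sigmoid_pos t) (sub_pos.2 (sigmoid_lt_one t))

theorem abs_sigmoid_le_one (t : ℝ) : |sigmoid t| ≤ 1 := by
  rw [abs_of_pos (sigmoid_pos t)]; exact sigmoid_le_one t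

theorem abs_mul_sigmoid_mul_one_sub_sigmoid_le (hβ : 0 ≤ β) (t : ℝ) :
    |β * (sigmoid t * (1 - sigmoid t))| ≤ β := by
  rw [abs_of_nonneg (mul_nonneg hβ (sigmoid_mul_one_sub_sigmoid_pos t).le)]
  exact mul_le_of_le_one_right hβ (by nlinarith [sigmoid_pos t, sigmoid_lt_one t])

theorem softplus_mul_sigmoid_le (hβ : 0 < β) {u w : ℝ} (huw : u ≤ w) :
    softplus β u * sigmoid (β * w) ≤ softplus β w * sigmoid (β * u) := by
  have hratio : ∀ x, softplus β x / sigmoid (β * x) =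
      1 / β * (Real.log (1 + Real.exp (β * x)) * (1 + Real.exp (-(β * x)))) := by
    intro x
    rw [softplus, sigmoid_def, div_inv_eq_mul, add_comm (Real.exp _), mul_assoc]
  have h := mul_le_mul_of_nonneg_left
    (monotone_log_one_add_exp_mul_one_add_exp_neg (mul_le_mul_of_nonneg_left huw hβ.le))
    (one_div_pos.2 hβ).le
  rwa [← hratio, ← hratio, div_le_div_iff₀ (sigmoid_pos _) (sigmoid_pos _)] at h

end Softplus

/-- For softplus and a centered Gaussian `Z` of variance `s²`, the function
`x ↦ x·E[σ'(x + Z)] / E[σ(x + Z)]` is strictly increasing on `ℝ`. -/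
theorem softplus_smoothed_ratio_strictMono (β : ℝ) (hβ : 0 < β) (s : ℝ) (hs : 0 < s) :
    StrictMono (fun x : ℝ =>
      x * (∫ z, deriv (softplus β) (x + z) ∂gaussianReal 0 (Real.toNNReal (s ^ 2))) /
        ∫ z, softplus β (x + z) ∂gaussianReal 0 (Real.toNNReal (s ^ 2))) := by
  set N := gaussianReal 0 (Real.toNNReal (s ^ 2))
  have hv : Real.toNNReal (s ^ 2) ≠ 0 := (Real.toNNReal_pos.2 (by positivity)).ne'
  have hσ := hasDerivAt_softplus hβ.ne'
  have hσ' := hasDerivAt_sigmoid_const_mul β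
  have hσ'_le : ∀ y, |sigmoid (β * y)| ≤ 1 := fun y => abs_sigmoid_le_one _
  have hσ''_le : ∀ y, |β * (sigmoid (β * y) * (1 - sigmoid (β * y)))| ≤ β :=
    fun y => abs_mul_sigmoid_mul_one_sub_sigmoid_le hβ.le _
  have hF := integrable_comp_const_add_of_isBigO IsGaussian.integrable_id (μ := N)
    (continuous_softplus β) (softplus_isBigO hβ)
  have hP := integrable_comp_const_add_of_isBigO IsGaussian.integrable_id (μ := N)
    (by fun_prop) (isBigO_one_add_abs_of_abs_le hσ'_le)
  rw [deriv_softplus hβ.ne']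
  refine strictMono_mul_div_of_hasDerivAt
    (fun x => hasDerivAt_integral_comp_const_add hσ (by fun_prop) hσ'_le (hF x))
    (fun x => hasDerivAt_integral_comp_const_add hσ' (by fun_prop) hσ''_le (hP x))
    (fun x => integral_pos_of_forall_pos (hF x) fun z => softplus_pos hβ _)
    (fun x => lt_integral_comp_const_add_gaussianReal (lt_softplus hβ) (hF x))
    (fun x => integral_pos_of_forall_pos (hP x) fun z => sigmoid_pos _)
    (fun x => (integral_mono (hP x) (integrable_const 1) fun z => sigmoid_le_one _).trans_eq
      (by simp))
    (fun x => integral_nonneg fun z => mul_nonneg hβ.le (sigmoid_mul_one_sub_sigmoid_pos _).le)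
    (integral_comp_const_add_mul_le_sq hv hσ hσ' (by fun_prop)
      (fun u w => softplus_mul_sigmoid_le hβ) (softplus_isBigO hβ)
      (isBigO_one_add_abs_of_abs_le hσ'_le) (isBigO_one_add_abs_of_abs_le hσ''_le))
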